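/- arXiv:1905.10395 — 8 statements merged into one kernel-verified Lean document; each statement's English description precedes it below -/
import Mathlib

section
/- Let f be m-strongly convex and differentiable with minimizer x*. Fix λ > 0 and a point z, and let w be the unique minimizer of ψ(x) = f(x) + (λ/2)‖x - z‖². Then f(w) - f(x*) ≤ (λ/(m+λ))(f(z) - f(x*)). -/
/-!
Put `a = λ / (m + λ)`, `b = m / (m + λ)` and `p = a • z + b • x⋆`. Since `p - z = b • (x⋆ - z)`,
minimality of `w` gives `f w ≤ f p + (λ / 2) b² ‖x⋆ - z‖²`, while strong convexity gives
`f p ≤ a f z + b f x⋆ - (m / 2) a b ‖x⋆ - z‖²`. The choice of weights makes `λ b = m a`, so the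
two quadratic terms cancel and `f w ≤ a f z + b f x⋆`.
-/

open scoped InnerProductSpace

open Set

section InnerProductSpace

variable {E : Type*} [NormedAddCommGroup E] [InnerProductSpace ℝ E]

theorem strongConvexOn_univ_of_le_add_inner {f : E → ℝ} {g : E → E} {m : ℝ}
    (h : ∀ x y, f x + ⟪g x, y - x⟫_ℝ + m / 2 * ‖y - x‖ ^ 2 ≤ f y) :
    StrongConvexOn univ m f := by
  refine ⟨convex_univ, fun x _ y _ a b ha hb hab => ?_⟩
  set p := a • x + b • y
  obtain rfl : a = 1 - b := by linarith
  have hx : x - p = b • (x - y) := by module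
  have hy : y - p = (-(1 - b)) • (x - y) := by module
  have hpx := h p x
  have hpy := h p y
  rw [hx, real_inner_smul_right, norm_smul, Real.norm_of_nonneg hb] at hpx
  rw [hy, real_inner_smul_right, norm_smul, norm_neg, Real.norm_of_nonneg ha] at hpy
  simp only [smul_eq_mul]
  linarith [mul_le_mul_of_nonneg_left hpx ha, mul_le_mul_of_nonneg_left hpy hb]

end InnerProductSpace

section NormedSpace

variable {E : Type*} [NormedAddCommGroup E] [NormedSpace ℝ E]

theorem StrongConvexOn.le_of_isMinOn_add_sq_norm_sub {f : E → ℝ} {m lam : ℝ} {z w : E}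
    (hf : StrongConvexOn univ m f) (hm : 0 ≤ m) (hlam : 0 < lam)
    (hw : IsMinOn (fun x => f x + lam / 2 * ‖x - z‖ ^ 2) univ w) (x : E) :
    f w ≤ lam / (m + lam) * f z + m / (m + lam) * f x := by
  have hml : 0 < m + lam := by linarith
  set a := lam / (m + lam)
  set b := m / (m + lam)
  have ha : 0 ≤ a := by positivity
  have hb : 0 ≤ b := by positivity
  have hab : a + b = 1 := by simp only [a, b]; field_simp; ring
  have hweights : lam * b = m * a := by simp only [a, b]; field_simp
  set p := a • z + b • x
  have hpz : p - z = b • (x - z) := by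
    simp only [p]; rw [eq_sub_of_add_eq hab]; module
  have hmin : f w ≤ f p + lam / 2 * (b ^ 2 * ‖x - z‖ ^ 2) := by
    have := isMinOn_univ_iff.mp hw p
    rw [hpz, norm_smul, Real.norm_of_nonneg hb, mul_pow] at this
    linarith [mul_nonneg hlam.le (sq_nonneg ‖w - z‖)]
  have hconv : f p ≤ a * f z + b * f x - a * b * (m / 2 * ‖z - x‖ ^ 2) :=
    hf.2 trivial trivial ha hb hab
  rw [norm_sub_rev] at hconv
  linear_combination hmin + hconv + (b / 2 * ‖x - z‖ ^ 2) * hweights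

end NormedSpace

theorem stmt_4_general {n : ℕ} (f : EuclideanSpace ℝ (Fin n) → ℝ) (m lam : ℝ)
    (hm : 0 < m) (hlam : 0 < lam)
    (hconv : ∀ x y, f x + ⟪gradient f x, y - x⟫_ℝ + m / 2 * ‖y - x‖ ^ 2 ≤ f y)
    (xstar z w : EuclideanSpace ℝ (Fin n))
    (hw : ∀ x, f w + lam / 2 * ‖w - z‖ ^ 2 ≤ f x + lam / 2 * ‖x - z‖ ^ 2) :
    f w - f xstar ≤ lam / (m + lam) * (f z - f xstar) := by
  have hf : StrongConvexOn univ m f := strongConvexOn_univ_of_le_add_inner hconv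
  have key := hf.le_of_isMinOn_add_sq_norm_sub hm.le hlam (isMinOn_univ_iff.mpr hw) xstar
  have hweights : lam / (m + lam) + m / (m + lam) = 1 := by
    rw [← add_div, add_comm, div_self (by positivity)]
  linear_combination key + f xstar * hweights

theorem stmt_4 {n : ℕ} (f : EuclideanSpace ℝ (Fin n) → ℝ) (m lam : ℝ)
    (hm : 0 < m) (hlam : 0 < lam)
    (hdiff : Differentiable ℝ f)
    (hconv : ∀ x y, f x + ⟪gradient f x, y - x⟫_ℝ + m / 2 * ‖y - x‖ ^ 2 ≤ f y)
    (xstar z w : EuclideanSpace ℝ (Fin n))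
    (hmin : ∀ x, f xstar ≤ f x)
    (hw : ∀ x, f w + lam / 2 * ‖w - z‖ ^ 2 ≤ f x + lam / 2 * ‖x - z‖ ^ 2) :
    f w - f xstar ≤ lam / (m + lam) * (f z - f xstar) :=
  stmt_4_general f m lam hm hlam hconv xstar z w hw
end

section
/- Let f be m-strongly convex and differentiable with minimizer x*, let λ > 0, z a point, and w the minimizer of ψ(x) = f(x) + (λ/2)‖x - z‖². Then ‖w - x*‖² ≤ (λ²/(m(m+λ)))‖z - x*‖². -/
/-!
Strong convexity makes the gradient strongly monotone:
`m ‖x - y‖² ≤ ⟪∇f x - ∇f y, x - y⟫`. At the minimizer `∇f x* = 0`, and the first-order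
condition for `w` gives `∇f w = λ (z - w)`. Monotonicity between `w` and `x*` then yields
`(m + λ) ‖w - x*‖² ≤ λ ⟪z - x*, w - x*⟫ ≤ λ ‖z - x*‖ ‖w - x*‖`, i.e.
`‖w - x*‖ ≤ λ / (m + λ) ‖z - x*‖`, and `(m + λ)² ≥ m (m + λ)`.
-/

open scoped InnerProductSpace

section

variable {E : Type*} [NormedAddCommGroup E] [InnerProductSpace ℝ E] [CompleteSpace E]

theorem HasGradientAt.eq_smul_sub_of_isLocalMin_add_sq_norm {f : E → ℝ} {g z w : E} {lam : ℝ}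
    (hf : HasGradientAt f g w) (hw : IsLocalMin (fun x => f x + lam / 2 * ‖x - z‖ ^ 2) w) :
    g = lam • (z - w) := by
  have hψ := hf.hasFDerivAt.add
    (((hasStrictFDerivAt_norm_sq (w - z)).hasFDerivAt.comp w
      ((hasFDerivAt_id w).sub_const z)).const_mul (lam / 2))
  have hzero := hw.hasFDerivAt_eq_zero hψ
  -- evaluating the vanishing derivative at `v = g - λ (z - w)` gives `‖v‖² = 0`
  rw [← sub_eq_zero, ← inner_self_eq_zero (𝕜 := ℝ)]
  set v := g - lam • (z - w) with hv_def
  have hv := congrArg (· v) hzero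
  simp only [add_apply, InnerProductSpace.toDual_apply_apply, smul_apply,
    ContinuousLinearMap.comp_apply, innerSL_apply_apply, ContinuousLinearMap.id_apply,
    zero_apply, smul_eq_mul, nsmul_eq_mul, Nat.cast_ofNat] at hv
  nth_rw 1 [hv_def]
  rw [inner_sub_left g, real_inner_smul_left, ← neg_sub w z, inner_neg_left]
  linarith

theorem mul_sq_norm_sub_le_inner_gradient_sub_gradient {f : E → ℝ} {m : ℝ}
    (hconv : ∀ x y, f x + ⟪gradient f x, y - x⟫_ℝ + m / 2 * ‖y - x‖ ^ 2 ≤ f y) (x y : E) :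
    m * ‖x - y‖ ^ 2 ≤ ⟪gradient f x - gradient f y, x - y⟫_ℝ := by
  have h1 := hconv x y
  have h2 := hconv y x
  rw [norm_sub_rev] at h1
  have hyx : ⟪gradient f x, y - x⟫_ℝ = -⟪gradient f x, x - y⟫_ℝ := by
    rw [← inner_neg_right, neg_sub]
  rw [inner_sub_left]
  linarith

theorem norm_sub_le_of_gradient_eq_smul_sub {f : E → ℝ} {m lam : ℝ}
    (hconv : ∀ x y, f x + ⟪gradient f x, y - x⟫_ℝ + m / 2 * ‖y - x‖ ^ 2 ≤ f y)
    (hlam : 0 ≤ lam) {xstar z w : E}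
    (hxstar : gradient f xstar = 0) (hw : gradient f w = lam • (z - w)) :
    (m + lam) * ‖w - xstar‖ ≤ lam * ‖z - xstar‖ := by
  have hmono := mul_sq_norm_sub_le_inner_gradient_sub_gradient hconv w xstar
  have hsplit : z - w = (z - xstar) - (w - xstar) := by abel
  rw [hxstar, hw, sub_zero, real_inner_smul_left, hsplit, inner_sub_left,
    real_inner_self_eq_norm_sq] at hmono
  have hcs := real_inner_le_norm (z - xstar) (w - xstar)
  rcases (norm_nonneg (w - xstar)).eq_or_lt with hzero | hpos
  · rw [← hzero, mul_zero]; positivity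
  · refine le_of_mul_le_mul_right ?_ hpos
    nlinarith

end

theorem stmt_5 {n : ℕ} (f : EuclideanSpace ℝ (Fin n) → ℝ) (m lam : ℝ)
    (hm : 0 < m) (hlam : 0 < lam)
    (hdiff : Differentiable ℝ f)
    (hconv : ∀ x y, f x + ⟪gradient f x, y - x⟫_ℝ + m / 2 * ‖y - x‖ ^ 2 ≤ f y)
    (xstar z w : EuclideanSpace ℝ (Fin n))
    (hmin : ∀ x, f xstar ≤ f x)
    (hw : ∀ x, f w + lam / 2 * ‖w - z‖ ^ 2 ≤ f x + lam / 2 * ‖x - z‖ ^ 2) :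
    ‖w - xstar‖ ^ 2 ≤ lam ^ 2 / (m * (m + lam)) * ‖z - xstar‖ ^ 2 := by
  have hgrad_xstar : gradient f xstar = 0 := by
    rw [gradient, IsLocalMin.fderiv_eq_zero (.of_forall hmin), map_zero]
  have hgrad_w : gradient f w = lam • (z - w) :=
    (hdiff w).hasGradientAt.eq_smul_sub_of_isLocalMin_add_sq_norm (.of_forall hw)
  have hcontract :=
    norm_sub_le_of_gradient_eq_smul_sub hconv hlam.le hgrad_xstar hgrad_w
  have hmlam : 0 < m + lam := by positivity
  calc ‖w - xstar‖ ^ 2 ≤ (lam / (m + lam) * ‖z - xstar‖) ^ 2 := by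
        gcongr
        rw [div_mul_eq_mul_div, le_div_iff₀ hmlam, mul_comm]
        exact hcontract
    _ = lam ^ 2 / (m + lam) ^ 2 * ‖z - xstar‖ ^ 2 := by rw [mul_pow, div_pow]
    _ ≤ lam ^ 2 / (m * (m + lam)) * ‖z - xstar‖ ^ 2 := by
        gcongr
        nlinarith
end

section
/- Let μ₁ ≤ μ₂ ≤ ... ≤ μ_p be real numbers and Y₁,...,Y_p be random variables with E[Yᵢ] = μᵢ and Var(Yᵢ) ≤ σ². Let μ̃ = μ_m where m = argmin{Y₁,...,Y_p}. Then for any a > 0, P(μ̃ ≥ μ₁ + a) ≤ 4σ²p/a². -/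
/-!
If the index `m ω` minimising `Y · ω` has mean at least `μ[Y i₀] + a`, then `Y i₀ - Y (m ω)` is
nonnegative although its mean is at most `-a`, so it deviates from its mean by at least `a`.
Chebyshev's inequality bounds each such deviation event by `Var[Y i₀ - Y i] / a² ≤ 4σ² / a²`,
and a union bound over the indices gives the factor `p`.
-/

open MeasureTheory ProbabilityTheory

section

variable {Ω : Type*} [MeasurableSpace Ω] {μ : Measure Ω}

lemma variance_sub_le_two_mul_add [IsFiniteMeasure μ] {X Z : Ω → ℝ} (hX : MemLp X 2 μ)
    (hZ : MemLp Z 2 μ) : Var[X - Z; μ] ≤ 2 * Var[X; μ] + 2 * Var[Z; μ] := by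
  -- parallelogram law: `Var[X - Z] + Var[X + Z] = 2 Var[X] + 2 Var[Z]`
  rw [variance_sub hX hZ]
  linarith [variance_add hX hZ, variance_nonneg (X + Z) μ]

lemma measureReal_abs_sub_integral_ge_le [IsFiniteMeasure μ] {X : Ω → ℝ} (hX : MemLp X 2 μ)
    {c : ℝ} (hc : 0 < c) : μ.real {ω | c ≤ |X ω - μ[X]|} ≤ Var[X; μ] / c ^ 2 :=
  ENNReal.toReal_le_of_le_ofReal (div_nonneg (variance_nonneg X μ) (sq_nonneg c))
    (meas_ge_le_variance_div_sq hX hc)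

lemma setOf_integral_argmin_ge_subset {ι : Type*} {Y : ι → Ω → ℝ} (hY : ∀ i, Integrable (Y i) μ)
    {m : Ω → ι} (hargmin : ∀ ω i, Y (m ω) ω ≤ Y i ω) (i₀ : ι) (a : ℝ) :
    {ω | μ[Y i₀] + a ≤ μ[Y (m ω)]} ⊆ ⋃ i, {ω | a ≤ |(Y i₀ - Y i) ω - μ[Y i₀ - Y i]|} := by
  intro ω hω
  refine Set.mem_iUnion.2 ⟨m ω, ?_⟩
  have hmean : ∫ x, Y i₀ x - Y (m ω) x ∂μ = μ[Y i₀] - μ[Y (m ω)] := integral_sub (hY i₀) (hY (m ω))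
  have hmin := hargmin ω i₀
  simp only [Set.mem_ofPred_eq, Pi.sub_apply, hmean] at hω ⊢
  exact le_trans (by linarith) (le_abs_self _)

theorem measureReal_integral_argmin_ge_add_le [IsProbabilityMeasure μ] {ι : Type*} [Fintype ι]
    {Y : ι → Ω → ℝ} (hY : ∀ i, MemLp (Y i) 2 μ) {σ : ℝ} (hvar : ∀ i, Var[Y i; μ] ≤ σ ^ 2)
    {m : Ω → ι} (hargmin : ∀ ω i, Y (m ω) ω ≤ Y i ω) (i₀ : ι) {a : ℝ} (ha : 0 < a) :
    μ.real {ω | μ[Y i₀] + a ≤ μ[Y (m ω)]} ≤ 4 * σ ^ 2 * Fintype.card ι / a ^ 2 := by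
  have hdev (i : ι) : μ.real {ω | a ≤ |(Y i₀ - Y i) ω - μ[Y i₀ - Y i]|} ≤ 4 * σ ^ 2 / a ^ 2 := by
    refine (measureReal_abs_sub_integral_ge_le ((hY i₀).sub (hY i)) ha).trans ?_
    gcongr
    linarith [variance_sub_le_two_mul_add (hY i₀) (hY i), hvar i₀, hvar i]
  calc μ.real {ω | μ[Y i₀] + a ≤ μ[Y (m ω)]}
      ≤ μ.real (⋃ i, {ω | a ≤ |(Y i₀ - Y i) ω - μ[Y i₀ - Y i]|}) :=
        measureReal_mono (setOf_integral_argmin_ge_subset (fun i ↦ (hY i).integrable one_le_two)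
          hargmin i₀ a)
    _ ≤ ∑ i, μ.real {ω | a ≤ |(Y i₀ - Y i) ω - μ[Y i₀ - Y i]|} := measureReal_iUnion_fintype_le _
    _ ≤ ∑ _i : ι, 4 * σ ^ 2 / a ^ 2 := Finset.sum_le_sum fun i _ ↦ hdev i
    _ = 4 * σ ^ 2 * Fintype.card ι / a ^ 2 := by
        rw [Finset.sum_const, Finset.card_univ, nsmul_eq_mul]
        ring

end

theorem stmt_6_general {Ω : Type*} [MeasurableSpace Ω] (μ : Measure Ω) [IsProbabilityMeasure μ]
    (p : ℕ) (hp : 0 < p) (μs : Fin p → ℝ) (Y : Fin p → Ω → ℝ) (σ a : ℝ) (ha : 0 < a)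
    (hL2 : ∀ i, MemLp (Y i) 2 μ)
    (hmean : ∀ i, ∫ ω, Y i ω ∂μ = μs i)
    (hvar : ∀ i, variance (Y i) μ ≤ σ ^ 2)
    (m : Ω → Fin p)
    (hargmin : ∀ ω i, Y (m ω) ω ≤ Y i ω) :
    (μ {ω | μs ⟨0, hp⟩ + a ≤ μs (m ω)}).toReal ≤ 4 * σ ^ 2 * p / a ^ 2 := by
  simpa only [hmean, Fintype.card_fin, measureReal_def] using
    measureReal_integral_argmin_ge_add_le hL2 hvar hargmin ⟨0, hp⟩ ha

theorem stmt_6 {Ω : Type*} [MeasurableSpace Ω] (μ : Measure Ω) [IsProbabilityMeasure μ]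
    (p : ℕ) (hp : 0 < p) (μs : Fin p → ℝ) (Y : Fin p → Ω → ℝ) (σ a : ℝ) (ha : 0 < a)
    (hmono : Monotone μs)
    (hmeas : ∀ i, Measurable (Y i))
    (hL2 : ∀ i, MemLp (Y i) 2 μ)
    (hmean : ∀ i, ∫ ω, Y i ω ∂μ = μs i)
    (hvar : ∀ i, variance (Y i) μ ≤ σ ^ 2)
    (m : Ω → Fin p) (hmmeas : Measurable m)
    (hargmin : ∀ ω i, Y (m ω) ω ≤ Y i ω) :
    (μ {ω | μs ⟨0, hp⟩ + a ≤ μs (m ω)}).toReal ≤ 4 * σ ^ 2 * p / a ^ 2 :=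
  stmt_6_general μ p hp μs Y σ a ha hL2 hmean hvar m hargmin
end

section
/- Let μ₁ ≤ μ₂ ≤ ... ≤ μ_p and Y₁,...,Y_p random variables with E[Yᵢ] = μᵢ, Var(Yᵢ) ≤ σ². Let μ̃ = μ_m where m = argmin{Y₁,...,Y_p}. Then E[μ̃] - μ₁ ≤ 4√p·σ. -/
/-!
Write `d i = μs i - μs 0 ≥ 0` and `w i = P(m = i)`. The gap `E[μs m] - μs 0` equals `∑ w i * d i`,
whose square is at most `∑ w i * d i ^ 2` by Jensen. The argmin can be `i` only where `Y i ≤ Y 0`,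
which forces `Y i` or `Y 0` to deviate from its mean by at least `d i / 2`; by Chebyshev this has
probability at most `8 σ ^ 2 / d i ^ 2`. Hence every term is at most `8 σ ^ 2`, and the square of
the gap is at most `8 p σ ^ 2 ≤ (4 √p σ) ^ 2`.
-/

open MeasureTheory ProbabilityTheory

namespace ProbabilityTheory

variable {Ω : Type*} [MeasurableSpace Ω] {μ : Measure Ω} [IsFiniteMeasure μ]

lemma measureReal_abs_sub_integral_ge_le_variance_div_sq {X : Ω → ℝ} (hX : MemLp X 2 μ) {c : ℝ}
    (hc : 0 < c) : μ.real {ω | c ≤ |X ω - μ[X]|} ≤ variance X μ / c ^ 2 :=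
  ENNReal.toReal_le_of_le_ofReal (by have := variance_nonneg X μ; positivity)
    (meas_ge_le_variance_div_sq hX hc)

lemma sq_integral_sub_mul_measureReal_le_le_four_mul_variance_add {X W : Ω → ℝ}
    (hX : MemLp X 2 μ) (hW : MemLp W 2 μ) (hXW : μ[W] ≤ μ[X]) :
    (μ[X] - μ[W]) ^ 2 * μ.real {ω | X ω ≤ W ω} ≤ 4 * (variance X μ + variance W μ) := by
  rcases hXW.eq_or_lt with hXW | hXW
  · simpa [hXW] using add_nonneg (variance_nonneg X μ) (variance_nonneg W μ)
  set c := (μ[X] - μ[W]) / 2 with hc_def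
  have hc : 0 < c := by linarith
  -- `X ≤ W` although `μ[W] + 2 * c = μ[X]`: one of them is `c` away from its mean.
  have hsub : {ω | X ω ≤ W ω} ⊆ {ω | c ≤ |X ω - μ[X]|} ∪ {ω | c ≤ |W ω - μ[W]|} := by
    intro ω hω
    by_contra hcon
    simp only [Set.mem_union, Set.mem_ofPred_eq, not_or, not_le, abs_lt] at hω hcon
    linarith
  have hprob : μ.real {ω | X ω ≤ W ω} ≤ variance X μ / c ^ 2 + variance W μ / c ^ 2 :=
    (measureReal_mono hsub).trans <| (measureReal_union_le _ _).trans <|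
      add_le_add (measureReal_abs_sub_integral_ge_le_variance_div_sq hX hc)
        (measureReal_abs_sub_integral_ge_le_variance_div_sq hW hc)
  calc (μ[X] - μ[W]) ^ 2 * μ.real {ω | X ω ≤ W ω}
      ≤ (2 * c) ^ 2 * (variance X μ / c ^ 2 + variance W μ / c ^ 2) := by
        rw [hc_def, mul_div_cancel₀ _ two_ne_zero]; gcongr
    _ = 4 * (variance X μ + variance W μ) := by field_simp; ring

variable {ι : Type*}

lemma sq_integral_sub_mul_measureReal_argmin_le {Y : ι → Ω → ℝ} {m : Ω → ι} {i j : ι}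
    (hargmin : ∀ ω, Y (m ω) ω ≤ Y j ω) (hi : MemLp (Y i) 2 μ) (hj : MemLp (Y j) 2 μ)
    (hij : μ[Y j] ≤ μ[Y i]) :
    (μ[Y i] - μ[Y j]) ^ 2 * μ.real (m ⁻¹' {i}) ≤ 4 * (variance (Y i) μ + variance (Y j) μ) := by
  have hpick : m ⁻¹' {i} ⊆ {ω | Y i ω ≤ Y j ω} := fun ω hω => by
    simpa [show m ω = i from hω] using hargmin ω
  calc (μ[Y i] - μ[Y j]) ^ 2 * μ.real (m ⁻¹' {i})
      ≤ (μ[Y i] - μ[Y j]) ^ 2 * μ.real {ω | Y i ω ≤ Y j ω} :=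
        mul_le_mul_of_nonneg_left (measureReal_mono hpick) (sq_nonneg _)
    _ ≤ 4 * (variance (Y i) μ + variance (Y j) μ) :=
      sq_integral_sub_mul_measureReal_le_le_four_mul_variance_add hi hj hij

lemma integral_comp_eq_sum_measureReal_preimage_smul {E : Type*} [Fintype ι] [MeasurableSpace ι]
    [MeasurableSingletonClass ι] [NormedAddCommGroup E] [NormedSpace ℝ E] [CompleteSpace E]
    {m : Ω → ι} (hm : Measurable m) (f : ι → E) :
    ∫ ω, f (m ω) ∂μ = ∑ i, μ.real (m ⁻¹' {i}) • f i := by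
  rw [← integral_map hm.aemeasurable StronglyMeasurable.of_discrete.aestronglyMeasurable,
    integral_fintype .of_finite]
  simp_rw [map_measureReal_apply hm (measurableSet_singleton _)]

end ProbabilityTheory

theorem stmt_7_general {Ω : Type*} [MeasurableSpace Ω] (μ : Measure Ω) [IsProbabilityMeasure μ]
    (p : ℕ) (hp : 0 < p) (μs : Fin p → ℝ) (Y : Fin p → Ω → ℝ) (σ : ℝ) (hσ : 0 ≤ σ)
    (hmono : Monotone μs)
    (hL2 : ∀ i, MemLp (Y i) 2 μ)
    (hmean : ∀ i, ∫ ω, Y i ω ∂μ = μs i)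
    (hvar : ∀ i, variance (Y i) μ ≤ σ ^ 2)
    (m : Ω → Fin p) (hmmeas : Measurable m)
    (hargmin : ∀ ω i, Y (m ω) ω ≤ Y i ω) :
    (∫ ω, μs (m ω) ∂μ) - μs ⟨0, hp⟩ ≤ 4 * Real.sqrt p * σ := by
  set z : Fin p := ⟨0, hp⟩
  set w : Fin p → ℝ := fun i => μ.real (m ⁻¹' {i})
  set d : Fin p → ℝ := fun i => μs i - μs z
  have hw_sum : ∑ i, w i = 1 := by
    rw [sum_measureReal_preimage_singleton _ fun i _ => hmmeas (measurableSet_singleton i)]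
    simp
  have hgap : (∫ ω, μs (m ω) ∂μ) - μs z = ∑ i, w i * d i := by
    simp only [integral_comp_eq_sum_measureReal_preimage_smul hmmeas, smul_eq_mul, w, d, mul_sub,
      Finset.sum_sub_distrib, ← Finset.sum_mul, hw_sum, one_mul]
  have hterm (i : Fin p) : w i * d i ^ 2 ≤ 8 * σ ^ 2 := by
    have := sq_integral_sub_mul_measureReal_argmin_le (fun ω => hargmin ω z) (hL2 i) (hL2 z)
      (by simpa [hmean] using hmono (show z ≤ i from Nat.zero_le _))
    simp only [hmean] at this
    linarith [hvar i, hvar z]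
  have hjensen : (∑ i, w i * d i) ^ 2 ≤ ∑ i, w i * d i ^ 2 :=
    (even_two.convexOn_pow (𝕜 := ℝ)).map_sum_le (fun i _ => measureReal_nonneg) hw_sum
      (fun _ _ => Set.mem_univ _)
  have hsq : ((∫ ω, μs (m ω) ∂μ) - μs z) ^ 2 ≤ (4 * Real.sqrt p * σ) ^ 2 := by
    rw [hgap, mul_pow, mul_pow, Real.sq_sqrt p.cast_nonneg]
    calc (∑ i, w i * d i) ^ 2 ≤ ∑ _i : Fin p, 8 * σ ^ 2 :=
          hjensen.trans (Finset.sum_le_sum fun i _ => hterm i)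
      _ ≤ 4 ^ 2 * p * σ ^ 2 := by simp; nlinarith [sq_nonneg σ, p.cast_nonneg (α := ℝ)]
  exact (abs_le_of_sq_le_sq hsq (by positivity)).trans' (le_abs_self _)

theorem stmt_7 {Ω : Type*} [MeasurableSpace Ω] (μ : Measure Ω) [IsProbabilityMeasure μ]
    (p : ℕ) (hp : 0 < p) (μs : Fin p → ℝ) (Y : Fin p → Ω → ℝ) (σ : ℝ) (hσ : 0 ≤ σ)
    (hmono : Monotone μs)
    (hmeas : ∀ i, Measurable (Y i))
    (hL2 : ∀ i, MemLp (Y i) 2 μ)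
    (hmean : ∀ i, ∫ ω, Y i ω ∂μ = μs i)
    (hvar : ∀ i, variance (Y i) μ ≤ σ ^ 2)
    (m : Ω → Fin p) (hmmeas : Measurable m)
    (hargmin : ∀ ω i, Y (m ω) ω ≤ Y i ω) :
    (∫ ω, μs (m ω) ∂μ) - μs ⟨0, hp⟩ ≤ 4 * Real.sqrt p * σ :=
  stmt_7_general μ p hp μs Y σ hσ hmono hL2 hmean hvar m hmmeas hargmin
end

section
/- There exists a twice continuously differentiable function f: ℝ → ℝ with bounded second derivative such that for every 0 < λ ≤ 1 there exist points x_λ, y_λ with x_λ = -y_λ such that (x_λ, y_λ, 0) is a stationary point of the EASGD objective L(x¹, x², x̃) = f(x¹) + f(x²) + (λ/2)(‖x¹ - x̃‖² + ‖x² - x̃‖²) (so f'(x_λ) + λ(x_λ - 0) = 0, f'(y_λ) + λ(y_λ - 0) = 0, and λ(0 - x_λ) + λ(0 - y_λ) = 0), yet f'(x_λ) ≠ 0, f'(y_λ) ≠ 0, and f'(0) ≠ 0. -/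
open Real intervalIntegral

noncomputable def gg : ℝ → ℝ := fun s => (max (1 - s^2) 0)^3

lemma gg_cont : Continuous gg := by
  unfold gg
  fun_prop

-- derivative of u ↦ (max u 0)^3
lemma hmax (u : ℝ) : HasDerivAt (fun u : ℝ => (max u 0)^3) (3 * (max u 0)^2) u := by
  rcases lt_trichotomy u 0 with h | h | h
  · have he : (fun u : ℝ => (max u 0)^3) =ᶠ[nhds u] fun _ => (0:ℝ) := by
      filter_upwards [eventually_lt_nhds h] with v hv
      rw [max_eq_right hv.le]; ring
    have h0 : HasDerivAt (fun _ : ℝ => (0:ℝ)) 0 u := hasDerivAt_const _ _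
    have := h0.congr_of_eventuallyEq he
    simpa [max_eq_right h.le] using this
  · subst h
    rw [hasDerivAt_iff_tendsto_slope]
    have hb : ∀ v : ℝ, ‖slope (fun u : ℝ => (max u 0)^3) 0 v‖ ≤ v^2 := by
      intro v
      rcases eq_or_ne v 0 with rfl | hv
      · simp [slope]
      rw [slope_def_field]
      rcases le_or_gt v 0 with h' | h'
      · simp [max_eq_right h', max_eq_right (by norm_num : (0:ℝ) ≤ 0)]
        positivity
      · rw [max_eq_left h'.le, max_eq_right le_rfl]
        rw [show (v^3 - (0:ℝ)^3) / (v - 0) = v^2 by field_simp; ring]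
        rw [Real.norm_eq_abs, abs_of_nonneg (by positivity)]
    have ht : Filter.Tendsto (fun v : ℝ => v^2) (nhdsWithin 0 {(0:ℝ)}ᶜ) (nhds 0) := by
      have := (continuous_pow 2).tendsto (0:ℝ)
      simpa using this.mono_left nhdsWithin_le_nhds
    have := squeeze_zero_norm hb ht
    simpa using this
  · have he : (fun u : ℝ => (max u 0)^3) =ᶠ[nhds u] fun v => v^3 := by
      filter_upwards [eventually_gt_nhds h] with v hv
      rw [max_eq_left hv.le]
    have : HasDerivAt (fun v : ℝ => v^3) (3 * u^2) u := by
      simpa using hasDerivAt_pow 3 u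
    have h3 := this.congr_of_eventuallyEq he
    simpa [max_eq_left h.le] using h3

lemma gg_hasDeriv (t : ℝ) :
    HasDerivAt gg ((3 * (max (1 - t^2) 0)^2) * (-(2*t))) t := by
  have hin : HasDerivAt (fun t : ℝ => 1 - t^2) (-(2*t)) t := by
    exact ((hasDerivAt_const t (1:ℝ)).sub (hasDerivAt_pow 2 t)).congr_deriv (by norm_num)
  exact (hmax (1 - t^2)).comp t hin

noncomputable def ff : ℝ → ℝ :=
  fun t => (1/2) * Real.exp (1 - t^2) + ∫ s in (0:ℝ)..t, gg s

lemma exp_part (t : ℝ) :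
    HasDerivAt (fun t : ℝ => (1/2) * Real.exp (1 - t^2)) (-t * Real.exp (1 - t^2)) t := by
  have hin : HasDerivAt (fun t : ℝ => 1 - t^2) (-(2*t)) t := by
    exact ((hasDerivAt_const t (1:ℝ)).sub (hasDerivAt_pow 2 t)).congr_deriv (by norm_num)
  have := (hin.exp).const_mul (1/2 : ℝ)
  exact this.congr_deriv (by ring)

lemma ff_hasDeriv (t : ℝ) :
    HasDerivAt ff (-t * Real.exp (1 - t^2) + gg t) t := by
  refine (exp_part t).add ?_
  exact integral_hasDerivAt_right (gg_cont.intervalIntegrable _ _)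
    (gg_cont.stronglyMeasurableAtFilter _ _) gg_cont.continuousAt

lemma ff_deriv : deriv ff = fun t => -t * Real.exp (1 - t^2) + gg t :=
  funext fun t => (ff_hasDeriv t).deriv

lemma ff_deriv2 (t : ℝ) :
    HasDerivAt (deriv ff)
      ((2*t^2 - 1) * Real.exp (1 - t^2) + (3 * (max (1 - t^2) 0)^2) * (-(2*t))) t := by
  rw [ff_deriv]
  refine HasDerivAt.add ?_ (gg_hasDeriv t)
  have hin : HasDerivAt (fun t : ℝ => 1 - t^2) (-(2*t)) t := by
    exact ((hasDerivAt_const t (1:ℝ)).sub (hasDerivAt_pow 2 t)).congr_deriv (by norm_num)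
  have h1 : HasDerivAt (fun t : ℝ => -t) (-1) t := by
    exact (hasDerivAt_id t).neg
  have := h1.mul hin.exp
  exact this.congr_deriv (by ring)

theorem stmt_9 :
    ∃ f : ℝ → ℝ, ContDiff ℝ 2 f ∧ (∃ C : ℝ, ∀ x, |deriv (deriv f) x| ≤ C) ∧
      ∀ l : ℝ, 0 < l → l ≤ 1 →
        ∃ x y : ℝ, x = -y ∧
          deriv f x + l * (x - 0) = 0 ∧
          deriv f y + l * (y - 0) = 0 ∧
          l * (0 - x) + l * (0 - y) = 0 ∧
          deriv f x ≠ 0 ∧ deriv f y ≠ 0 ∧ deriv f 0 ≠ 0 := by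
  refine ⟨ff, ?_, ?_, ?_⟩
  · -- ContDiff
    rw [show (2 : WithTop ℕ∞) = 1 + 1 from rfl, contDiff_succ_iff_deriv]
    refine ⟨fun t => (ff_hasDeriv t).differentiableAt, by simp, ?_⟩
    rw [contDiff_one_iff_deriv]
    refine ⟨fun t => (ff_deriv2 t).differentiableAt, ?_⟩
    have : deriv (deriv ff) = fun t =>
        (2*t^2 - 1) * Real.exp (1 - t^2) + (3 * (max (1 - t^2) 0)^2) * (-(2*t)) :=
      funext fun t => (ff_deriv2 t).deriv
    rw [this]
    fun_prop
  · -- bounded second derivative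
    refine ⟨2 * Real.exp 1 + 6, fun t => ?_⟩
    rw [(ff_deriv2 t).deriv]
    have h1 : |(2*t^2 - 1) * Real.exp (1 - t^2)| ≤ 2 * Real.exp 1 := by
      rw [abs_mul, abs_of_nonneg (Real.exp_pos _).le]
      have hb : |2*t^2 - 1| ≤ 2 * (t^2 + 1) := by
        rw [abs_le]; constructor <;> nlinarith [sq_nonneg t]
      have he : t^2 + 1 ≤ Real.exp (t^2) := by
        have := Real.add_one_le_exp (t^2)
        linarith
      calc |2*t^2 - 1| * Real.exp (1 - t^2)
          ≤ (2 * Real.exp (t^2)) * Real.exp (1 - t^2) := by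
            apply mul_le_mul_of_nonneg_right _ (Real.exp_pos _).le
            linarith
        _ = 2 * Real.exp 1 := by
            rw [mul_assoc, ← Real.exp_add]; ring_nf
    have h2 : |(3 * (max (1 - t^2) 0)^2) * (-(2*t))| ≤ 6 := by
      rcases le_or_gt (1 - t^2) 0 with h | h
      · rw [max_eq_right h]; simp
      · have ht : |t| ≤ 1 := by
          rw [abs_le]; constructor <;> nlinarith
        have hm : max (1 - t^2) 0 ≤ 1 := by
          apply max_le _ zero_le_one; nlinarith [sq_nonneg t]
        have hm0 : (0:ℝ) ≤ max (1 - t^2) 0 := le_max_right _ _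
        rw [abs_mul, abs_neg, abs_mul, abs_of_nonneg (by norm_num : (0:ℝ) ≤ 3),
          abs_of_nonneg (by positivity : (0:ℝ) ≤ (max (1 - t^2) 0)^2)]
        calc 3 * (max (1 - t^2) 0)^2 * |2*t|
            ≤ 3 * 1 * 2 := by
              apply mul_le_mul _ _ (abs_nonneg _) (by norm_num)
              · apply mul_le_mul_of_nonneg_left _ (by norm_num)
                calc (max (1 - t^2) 0)^2 ≤ 1^2 := by
                      apply pow_le_pow_left₀ hm0 hm
                  _ = 1 := one_pow 2
              · rw [abs_mul]; simp only [abs_two]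
                calc 2 * |t| ≤ 2 * 1 := by linarith
                  _ = 2 := by norm_num
          _ = 6 := by norm_num
    calc |(2*t^2 - 1) * Real.exp (1 - t^2) + (3 * (max (1 - t^2) 0)^2) * (-(2*t))|
        ≤ |(2*t^2 - 1) * Real.exp (1 - t^2)| + |(3 * (max (1 - t^2) 0)^2) * (-(2*t))| :=
          abs_add_le _ _
      _ ≤ 2 * Real.exp 1 + 6 := add_le_add h1 h2
  · -- stationary points
    intro l hl hl1
    have hlog : Real.log l ≤ 0 := Real.log_nonpos hl.le hl1
    set x := Real.sqrt (1 - Real.log l) with hx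
    have hx2 : x^2 = 1 - Real.log l := Real.sq_sqrt (by linarith)
    have hx0 : 0 ≤ x := Real.sqrt_nonneg _
    have hx1 : 1 ≤ x := by nlinarith
    have hexp : Real.exp (1 - x^2) = l := by
      rw [hx2]; rw [show 1 - (1 - Real.log l) = Real.log l by ring]
      exact Real.exp_log hl
    have hgx : gg x = 0 := by
      unfold gg
      rw [max_eq_right (by nlinarith)]; ring
    have hgnx : gg (-x) = 0 := by
      unfold gg
      rw [show ((-x):ℝ)^2 = x^2 by ring, max_eq_right (by nlinarith)]; ring
    have hdx : deriv ff x = -x * l := by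
      rw [ff_deriv]; simp only []; rw [hexp, hgx]; ring
    have hdnx : deriv ff (-x) = x * l := by
      rw [ff_deriv]
      simp only [show ((-x):ℝ)^2 = x^2 by ring, hexp, hgnx]
      ring
    have hd0 : deriv ff 0 = 1 := by
      rw [ff_deriv]
      unfold gg
      norm_num
    refine ⟨x, -x, by ring, ?_, ?_, by ring, ?_, ?_, ?_⟩
    · rw [hdx]; ring
    · rw [hdnx]; ring
    · rw [hdx]; intro h; nlinarith
    · rw [hdnx]; intro h; nlinarith
    · rw [hd0]; norm_num
end

section
/- Let A be symmetric positive definite with smallest eigenvalue α_n = m and largest eigenvalue α_1 = M, κ = M/m, and let e₁, e_n be corresponding unit eigenvectors. Then the point x = √(α_n/(α_1+α_n))·e₁ + √(α_1/(α_1+α_n))·e_n satisfies cos(θ(Ax, x)) = 2/(√κ + 1/√κ). -/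
/-!
In coordinates with respect to the orthonormal pair `e1`, `en`, the point `x` is `(a, b)` with
`a² = m/(M+m)` and `b² = M/(M+m)`. Hence `‖x‖ = 1`, `⟪A x, x⟫ = Ma² + mb² = 2mM/(M+m)` and
`‖A x‖² = M²a² + m²b² = mM`, so the cosine is `2√(mM)/(M+m) = 2/(√κ + 1/√κ)`.
-/

open scoped InnerProductSpace

section OrthonormalPair

variable {E : Type*} [NormedAddCommGroup E] [InnerProductSpace ℝ E] {e₁ e₂ : E}

theorem inner_smul_add_smul_of_orthonormal (h₁ : ‖e₁‖ = 1) (h₂ : ‖e₂‖ = 1) (h : ⟪e₁, e₂⟫_ℝ = 0)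
    (a b c d : ℝ) : ⟪a • e₁ + b • e₂, c • e₁ + d • e₂⟫_ℝ = a * c + b * d := by
  have h' : ⟪e₂, e₁⟫_ℝ = 0 := by rw [real_inner_comm, h]
  simp only [inner_add_left, inner_add_right, real_inner_smul_left, real_inner_smul_right,
    real_inner_self_eq_norm_sq, h₁, h₂, h, h']
  ring

theorem norm_smul_add_smul_of_orthonormal (h₁ : ‖e₁‖ = 1) (h₂ : ‖e₂‖ = 1) (h : ⟪e₁, e₂⟫_ℝ = 0)
    (a b : ℝ) : ‖a • e₁ + b • e₂‖ = √(a ^ 2 + b ^ 2) := by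
  rw [norm_eq_sqrt_real_inner, inner_smul_add_smul_of_orthonormal h₁ h₂ h]
  ring_nf

theorem inner_map_div_norm_mul_norm_of_eigenvectors (h₁ : ‖e₁‖ = 1) (h₂ : ‖e₂‖ = 1)
    (h : ⟪e₁, e₂⟫_ℝ = 0) {A : E →ₗ[ℝ] E} {μ₁ μ₂ : ℝ} (hA₁ : A e₁ = μ₁ • e₁) (hA₂ : A e₂ = μ₂ • e₂)
    (a b : ℝ) :
    ⟪A (a • e₁ + b • e₂), a • e₁ + b • e₂⟫_ℝ / (‖a • e₁ + b • e₂‖ * ‖A (a • e₁ + b • e₂)‖) =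
      (μ₁ * a * a + μ₂ * b * b) / (√(a ^ 2 + b ^ 2) * √((μ₁ * a) ^ 2 + (μ₂ * b) ^ 2)) := by
  have hAx : A (a • e₁ + b • e₂) = (μ₁ * a) • e₁ + (μ₂ * b) • e₂ := by
    simp only [map_add, map_smul, hA₁, hA₂, smul_smul, mul_comm]
  rw [hAx, inner_smul_add_smul_of_orthonormal h₁ h₂ h, norm_smul_add_smul_of_orthonormal h₁ h₂ h,
    norm_smul_add_smul_of_orthonormal h₁ h₂ h]

end OrthonormalPair

theorem two_div_sqrt_add_inv_sqrt_div {m M : ℝ} (hm : 0 < m) (hM : 0 < M) :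
    2 / (√(M / m) + 1 / √(M / m)) = 2 * √(m * M) / (M + m) := by
  have hs : 0 < √(M / m) := Real.sqrt_pos.2 (div_pos hM hm)
  have hsm : √(M / m) * m = √(m * M) := by
    rw [show m * M = M / m * m ^ 2 by field_simp, Real.sqrt_mul (div_pos hM hm).le,
      Real.sqrt_sq hm.le]
  rw [← hsm]
  field_simp
  rw [Real.sq_sqrt (div_pos hM hm).le]
  field_simp

theorem stmt_14_general {n : ℕ} (A : EuclideanSpace ℝ (Fin n) →ₗ[ℝ] EuclideanSpace ℝ (Fin n))
    (m M : ℝ) (hm : 0 < m) (hmM : m ≤ M)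
    (e1 en : EuclideanSpace ℝ (Fin n)) (he1 : ‖e1‖ = 1) (hen : ‖en‖ = 1)
    (horth : ⟪e1, en⟫_ℝ = 0)
    (hAe1 : A e1 = M • e1) (hAen : A en = m • en) :
    let x := Real.sqrt (m / (M + m)) • e1 + Real.sqrt (M / (M + m)) • en
    ⟪A x, x⟫_ℝ / (‖x‖ * ‖A x‖) = 2 / (Real.sqrt (M / m) + 1 / Real.sqrt (M / m)) := by
  dsimp only
  have hM : 0 < M := hm.trans_le hmM
  have hMm : (M + m) / (M + m) = 1 := div_self (by positivity)
  set a := √(m / (M + m))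
  set b := √(M / (M + m))
  have ha : a ^ 2 = m / (M + m) := Real.sq_sqrt (by positivity)
  have hb : b ^ 2 = M / (M + m) := Real.sq_sqrt (by positivity)
  have hnum : M * a * a + m * b * b = 2 * m * M / (M + m) := by
    linear_combination M * ha + m * hb
  have hx : a ^ 2 + b ^ 2 = 1 := by linear_combination ha + hb + hMm
  have hAx : (M * a) ^ 2 + (m * b) ^ 2 = m * M := by
    linear_combination M ^ 2 * ha + m ^ 2 * hb + m * M * hMm
  have hsqrt : √(m * M) ^ 2 = m * M := Real.sq_sqrt (by positivity)
  rw [inner_map_div_norm_mul_norm_of_eigenvectors he1 hen horth hAe1 hAen, hnum, hx, hAx,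
    Real.sqrt_one, one_mul, two_div_sqrt_add_inv_sqrt_div hm hM, div_div,
    div_eq_div_iff (by positivity) (by positivity)]
  linear_combination -2 * (M + m) * hsqrt

theorem stmt_14 {n : ℕ} (A : EuclideanSpace ℝ (Fin n) →ₗ[ℝ] EuclideanSpace ℝ (Fin n))
    (m M : ℝ) (hm : 0 < m) (hmM : m ≤ M)
    (hsym : ∀ u v, ⟪A u, v⟫_ℝ = ⟪u, A v⟫_ℝ)
    (e1 en : EuclideanSpace ℝ (Fin n)) (he1 : ‖e1‖ = 1) (hen : ‖en‖ = 1)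
    (horth : ⟪e1, en⟫_ℝ = 0)
    (hAe1 : A e1 = M • e1) (hAen : A en = m • en) :
    let x := Real.sqrt (m / (M + m)) • e1 + Real.sqrt (M / (M + m)) • en
    ⟪A x, x⟫_ℝ / (‖x‖ * ‖A x‖) = 2 / (Real.sqrt (M / m) + 1 / Real.sqrt (M / m)) :=
  stmt_14_general A m M hm hmM e1 en he1 hen horth hAe1 hAen
end

section
/- Let A be symmetric positive definite with mI ⪯ A ⪯ MI, κ = M/m, f(x) = (1/2)xᵀAx. Fix x ≠ 0 with cos(θ(Ax, x)) = r/√κ for some r satisfying r/√κ + r^{3/2}/κ^{1/4} ≤ 1. Let z be any point with f(z) ≤ f(x) and ⟨z, x⟩ ≤ 0. Then for any λ ≥ 0, the direction d_z = -(Ax + λ(x - z)) satisfies θ(d_z, -x) ≤ θ(-Ax, -x). -/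
open scoped InnerProductSpace

lemma my_arccos_anti {a b : ℝ} (h : a ≤ b) : Real.arccos b ≤ Real.arccos a := by
  simp only [Real.arccos]
  linarith [Real.monotone_arcsin h]

lemma my_quad_disc {a b e : ℝ} (he : 0 < e)
    (h : ∀ t : ℝ, 0 ≤ a + 2 * t * b + t ^ 2 * e) : b ^ 2 ≤ a * e := by
  have h1 := h (-b / e)
  have h2 : a + 2 * (-b / e) * b + (-b / e) ^ 2 * e = a - b ^ 2 / e := by
    field_simp
    ring
  rw [h2] at h1
  have h3 : b ^ 2 / e ≤ a := by linarith
  calc b ^ 2 = b ^ 2 / e * e := by field_simp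
  _ ≤ a * e := mul_le_mul_of_nonneg_right h3 he.le

set_option maxHeartbeats 1000000 in
theorem stmt_15 {n : ℕ} (A : EuclideanSpace ℝ (Fin n) →ₗ[ℝ] EuclideanSpace ℝ (Fin n))
    (m M r : ℝ) (hm : 0 < m) (hmM : m ≤ M)
    (hsym : ∀ u v, ⟪A u, v⟫_ℝ = ⟪u, A v⟫_ℝ)
    (hlow : ∀ u, m * ‖u‖ ^ 2 ≤ ⟪A u, u⟫_ℝ)
    (hup : ∀ u, ⟪A u, u⟫_ℝ ≤ M * ‖u‖ ^ 2)
    (x : EuclideanSpace ℝ (Fin n)) (hx : x ≠ 0)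
    (hcos : ⟪A x, x⟫_ℝ / (‖x‖ * ‖A x‖) = r / Real.sqrt (M / m))
    (hr : r / Real.sqrt (M / m) + r ^ ((3 : ℝ) / 2) / (M / m) ^ ((1 : ℝ) / 4) ≤ 1)
    (z : EuclideanSpace ℝ (Fin n))
    (hz : (1 : ℝ) / 2 * ⟪A z, z⟫_ℝ ≤ 1 / 2 * ⟪A x, x⟫_ℝ) (hzx : ⟪z, x⟫_ℝ ≤ 0)
    (lam : ℝ) (hlam : 0 ≤ lam) :
    InnerProductGeometry.angle (-(A x + lam • (x - z))) (-x) ≤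
      InnerProductGeometry.angle (-(A x)) (-x) := by
  have hxn : (0:ℝ) < ‖x‖ := norm_pos_iff.mpr hx
  have hK : (0:ℝ) < M / m := div_pos (lt_of_lt_of_le hm hmM) hm
  set K := M / m with hKdef
  clear_value K
  set s := Real.sqrt K with hsdef
  clear_value s
  have hs : 0 < s := by rw [hsdef]; exact Real.sqrt_pos.mpr hK
  have ha : 0 < ⟪A x, x⟫_ℝ := lt_of_lt_of_le (by positivity) (hlow x)
  have hAx : A x ≠ 0 := by
    intro h
    rw [h] at ha
    simp at ha
  have hAxn : 0 < ‖A x‖ := norm_pos_iff.mpr hAx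
  set c := ⟪A x, x⟫_ℝ / (‖x‖ * ‖A x‖) with hcdef
  clear_value c
  have hc : 0 < c := by rw [hcdef]; positivity
  have hca : ⟪A x, x⟫_ℝ = c * (‖x‖ * ‖A x‖) := by
    rw [hcdef]
    exact (div_mul_cancel₀ _ (by positivity)).symm
  have hrs : r = c * s := by
    rw [hcos]
    exact (div_mul_cancel₀ r hs.ne').symm
  -- quadratic form nonneg along line
  have he : 0 < ⟪A (A x), A x⟫_ℝ := lt_of_lt_of_le (by positivity) (hlow (A x))
  have hquad : ∀ t : ℝ, 0 ≤ ⟪A x, x⟫_ℝ + 2 * t * ‖A x‖ ^ 2 + t ^ 2 * ⟪A (A x), A x⟫_ℝ := by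
    intro t
    have h0 : 0 ≤ ⟪A (x + t • A x), x + t • A x⟫_ℝ := le_trans (by positivity) (hlow _)
    have h1 : ⟪A (A x), x⟫_ℝ = ‖A x‖ ^ 2 := by
      rw [hsym, real_inner_self_eq_norm_sq]
    have h2 : ⟪A x, A x⟫_ℝ = ‖A x‖ ^ 2 := real_inner_self_eq_norm_sq _
    simp only [map_add, map_smul, inner_add_left, inner_add_right, inner_smul_left,
      inner_smul_right, conj_trivial] at h0
    rw [h1, h2] at h0
    nlinarith [h0]
  have hb2 : (‖A x‖ ^ 2) ^ 2 ≤ ⟪A x, x⟫_ℝ * ⟪A (A x), A x⟫_ℝ :=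
    my_quad_disc he hquad
  have hbpos : (0:ℝ) < ‖A x‖ ^ 2 := by positivity
  have h4 : ‖A x‖ ^ 2 ≤ M * ⟪A x, x⟫_ℝ := by
    have h5 : ⟪A x, x⟫_ℝ * ⟪A (A x), A x⟫_ℝ ≤ ⟪A x, x⟫_ℝ * (M * ‖A x‖ ^ 2) :=
      mul_le_mul_of_nonneg_left (hup (A x)) ha.le
    have h6 : ‖A x‖ ^ 2 * ‖A x‖ ^ 2 ≤ M * ⟪A x, x⟫_ℝ * ‖A x‖ ^ 2 := by nlinarith
    exact le_of_mul_le_mul_right h6 hbpos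
  have hMx : (0:ℝ) < M * ‖x‖ := mul_pos (hm.trans_le hmM) hxn
  have hAxM : ‖A x‖ ≤ M * ‖x‖ := by
    nlinarith [h4, hup x, sq_nonneg (M * ‖x‖ - ‖A x‖), hAxn, hMx, hm.trans_le hmM]
  -- bound on z
  set t := Real.sqrt c with htdef
  clear_value t
  have ht : 0 < t := by rw [htdef]; exact Real.sqrt_pos.mpr hc
  have ht2 : t ^ 2 = c := by rw [htdef]; exact Real.sq_sqrt hc.le
  have hs2 : s ^ 2 = K := by rw [hsdef]; exact Real.sq_sqrt hK.le
  have hzsq : m * ‖z‖ ^ 2 ≤ ⟪A x, x⟫_ℝ := le_trans (hlow z) (by linarith)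
  have hzn : ‖z‖ ≤ t * s * ‖x‖ := by
    have h1 : ⟪A x, x⟫_ℝ ≤ c * M * ‖x‖ ^ 2 := by
      rw [hca]; nlinarith [hAxM, hc, hxn]
    have h2 : ‖z‖ ^ 2 ≤ c * K * ‖x‖ ^ 2 := by
      rw [hKdef, div_eq_mul_inv]
      have h5 := mul_le_mul_of_nonneg_left (le_trans hzsq h1) (inv_nonneg.mpr hm.le)
      have h6 : m⁻¹ * m = 1 := inv_mul_cancel₀ hm.ne'
      nlinarith [h5, h6]
    have h3 : (t * s * ‖x‖) ^ 2 = c * K * ‖x‖ ^ 2 := by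
      rw [mul_pow, mul_pow, ht2, hs2]
    have h7 : ‖z‖ ^ 2 ≤ (t * s * ‖x‖) ^ 2 := by rw [h3]; exact h2
    nlinarith [h7, norm_nonneg z, mul_pos (mul_pos ht hs) hxn]
  -- rewrite hr
  have hrpos : 0 < r := by rw [hrs]; positivity
  have h32 : r ^ ((3:ℝ)/2) = r * Real.sqrt r := by
    rw [Real.sqrt_eq_rpow, show ((3:ℝ)/2) = 1 + 1/2 by norm_num, Real.rpow_add hrpos,
      Real.rpow_one]
  have h14 : K ^ ((1:ℝ)/4) = Real.sqrt s := by
    rw [hsdef, Real.sqrt_eq_rpow, Real.sqrt_eq_rpow, ← Real.rpow_mul hK.le]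
    norm_num
  have hss : (0:ℝ) < Real.sqrt s := Real.sqrt_pos.mpr hs
  have hkey : c + c * (t * s) ≤ 1 := by
    have h1 : r / s = c := hcos.symm
    have h2 : r ^ ((3:ℝ)/2) / K ^ ((1:ℝ)/4) = c * (t * s) := by
      rw [h32, h14, hrs, Real.sqrt_mul hc.le, htdef]
      field_simp
    rw [h1, h2] at hr
    exact hr
  -- main inequality
  set w := x - z with hwdef
  clear_value w
  have hwx : ‖x‖ ^ 2 ≤ ⟪w, x⟫_ℝ := by
    rw [hwdef, inner_sub_left, real_inner_self_eq_norm_sq]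
    linarith
  have hwn : ‖w‖ ≤ (1 + t * s) * ‖x‖ := by
    have h := norm_sub_le x z
    rw [← hwdef] at h
    nlinarith [hzn, h]
  have hcw : c * (‖w‖ * ‖x‖) ≤ ⟪w, x⟫_ℝ := by
    have : c * (‖w‖ * ‖x‖) ≤ c * ((1 + t * s) * ‖x‖ * ‖x‖) := by
      nlinarith [hwn, hc, hxn]
    have h2 : c * ((1 + t * s) * ‖x‖ * ‖x‖) ≤ ‖x‖ ^ 2 := by nlinarith [hkey, hxn]
    linarith
  set d := A x + lam • w with hddef
  clear_value d
  have hdx : ⟪d, x⟫_ℝ = ⟪A x, x⟫_ℝ + lam * ⟪w, x⟫_ℝ := by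
    rw [hddef, inner_add_left, real_inner_smul_left]
  have hdn : ‖d‖ ≤ ‖A x‖ + lam * ‖w‖ := by
    have h := norm_add_le (A x) (lam • w)
    rw [← hddef, norm_smul, Real.norm_eq_abs, abs_of_nonneg hlam] at h
    exact h
  have hmain : c * (‖d‖ * ‖x‖) ≤ ⟪d, x⟫_ℝ := by
    rw [hdx, hca]
    have h1 : lam * (c * (‖w‖ * ‖x‖)) ≤ lam * ⟪w, x⟫_ℝ :=
      mul_le_mul_of_nonneg_left hcw hlam
    have h2 : c * (‖d‖ * ‖x‖) ≤ c * ((‖A x‖ + lam * ‖w‖) * ‖x‖) :=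
      mul_le_mul_of_nonneg_left (mul_le_mul_of_nonneg_right hdn (norm_nonneg x)) hc.le
    calc c * (‖d‖ * ‖x‖) ≤ c * ((‖A x‖ + lam * ‖w‖) * ‖x‖) := h2
    _ = c * (‖x‖ * ‖A x‖) + lam * (c * (‖w‖ * ‖x‖)) := by ring
    _ ≤ c * (‖x‖ * ‖A x‖) + lam * ⟪w, x⟫_ℝ := by linarith
  have hdxpos : 0 < ⟪d, x⟫_ℝ := by
    rw [hdx]
    have : 0 ≤ lam * ⟪w, x⟫_ℝ := mul_nonneg hlam (le_trans (by positivity) hwx)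
    linarith
  have hd0 : d ≠ 0 := by
    intro h
    rw [h, inner_zero_left] at hdxpos
    exact lt_irrefl 0 hdxpos
  have hdnn : 0 < ‖d‖ := norm_pos_iff.mpr hd0
  -- conclude
  rw [InnerProductGeometry.angle_neg_neg, InnerProductGeometry.angle_neg_neg]
  unfold InnerProductGeometry.angle
  apply my_arccos_anti
  rw [div_le_div_iff₀ (by positivity) (by positivity)]
  calc ⟪A x, x⟫_ℝ * (‖d‖ * ‖x‖) = c * (‖d‖ * ‖x‖) * (‖x‖ * ‖A x‖) := by rw [hca]; ring
  _ ≤ ⟪d, x⟫_ℝ * (‖x‖ * ‖A x‖) :=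
    mul_le_mul_of_nonneg_right hmain (by positivity)
  _ = ⟪d, x⟫_ℝ * (‖A x‖ * ‖x‖) := by ring
end

section
/- Let f: ℝⁿ → ℝ be m-strongly convex and M-Lipschitz-differentiable with minimizer x*. Let x, z be points, δ = x - z, and consider the deterministic LGD step x₊ = x - η(∇f(x) + λ(x - z)) with η ≤ 1/(2M), ηλ ≤ m/(2M), η√λ ≤ √m/(M√2). Then f(x₊) - f(x*) ≤ (1 - mη)(f(x) - f(x*)) - ηλ(f(x) - f(z)). -/
/-!
Starting from the quadratic upper bound of the descent lemma at `x`, expand the step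
`x₊ - x = -η (∇f x + λ (x - z))`. The term `-η ‖∇f x‖²` is paid for by the
Polyak–Łojasiewicz inequality `2m (f x - f x*) ≤ ‖∇f x‖²`, the term `-ηλ ⟪∇f x, x - z⟫` by strong
convexity between `x` and `z`, and after `‖a + b‖² ≤ 2 (‖a‖² + ‖b‖²)` the quadratic error
`Mη² (‖∇f x‖² + λ² ‖x - z‖²)` is absorbed using `Mη ≤ 1/2` and `Mηλ ≤ m/2`.
-/

open scoped InnerProductSpace
open Set

theorem sq_norm_add_le {F : Type*} [SeminormedAddCommGroup F] (a b : F) :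
    ‖a + b‖ ^ 2 ≤ 2 * (‖a‖ ^ 2 + ‖b‖ ^ 2) :=
  (pow_le_pow_left₀ (norm_nonneg _) (norm_add_le a b) 2).trans add_sq_le

section

variable {E : Type*} [NormedAddCommGroup E] [InnerProductSpace ℝ E] [CompleteSpace E]

theorem le_add_inner_gradient_add_sq_norm_of_lipschitz {f : E → ℝ} {M : ℝ}
    (hf : Differentiable ℝ f) (hlip : ∀ x y, ‖gradient f x - gradient f y‖ ≤ M * ‖x - y‖)
    (x y : E) : f y ≤ f x + ⟪gradient f x, y - x⟫_ℝ + M / 2 * ‖y - x‖ ^ 2 := by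
  set v := y - x
  set φ : ℝ → ℝ := fun t ↦ f (x + t • v) - t * ⟪gradient f x, v⟫_ℝ - M / 2 * t ^ 2 * ‖v‖ ^ 2
  have hφ : ∀ t,
      HasDerivAt φ (⟪gradient f (x + t • v) - gradient f x, v⟫_ℝ - M * t * ‖v‖ ^ 2) t := by
    intro t
    have hline : HasDerivAt (fun t : ℝ ↦ x + t • v) v t := by
      simpa using ((hasDerivAt_id t).smul_const v).const_add x
    have hcurve : HasDerivAt (fun t : ℝ ↦ f (x + t • v)) ⟪gradient f (x + t • v), v⟫_ℝ t := by
      simpa [Function.comp_def] using (hf _).hasGradientAt.hasFDerivAt.comp_hasDerivAt t hline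
    have := (hcurve.sub ((hasDerivAt_id t).mul_const ⟪gradient f x, v⟫_ℝ)).sub
      (((hasDerivAt_pow 2 t).const_mul (M / 2)).mul_const (‖v‖ ^ 2))
    exact this.congr_deriv (by simp only [inner_sub_left]; push_cast; ring)
  have hφ_nonpos : ∀ t ∈ interior (Ici (0 : ℝ)),
      ⟪gradient f (x + t • v) - gradient f x, v⟫_ℝ - M * t * ‖v‖ ^ 2 ≤ 0 := by
    intro t ht
    rw [interior_Ici] at ht
    rw [sub_nonpos]
    have hnorm : ‖x + t • v - x‖ = t * ‖v‖ := by
      rw [add_sub_cancel_left, norm_smul, Real.norm_of_nonneg ht.out.le]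
    calc ⟪gradient f (x + t • v) - gradient f x, v⟫_ℝ
        ≤ ‖gradient f (x + t • v) - gradient f x‖ * ‖v‖ := real_inner_le_norm _ _
      _ ≤ M * ‖x + t • v - x‖ * ‖v‖ := by gcongr; exact hlip _ _
      _ = M * t * ‖v‖ ^ 2 := by rw [hnorm]; ring
  have hanti : AntitoneOn φ (Ici 0) :=
    antitoneOn_of_hasDerivWithinAt_nonpos (convex_Ici 0)
      (fun t _ ↦ (hφ t).continuousAt.continuousWithinAt)
      (fun t _ ↦ (hφ t).hasDerivWithinAt) hφ_nonpos
  have := hanti self_mem_Ici (mem_Ici.mpr zero_le_one) zero_le_one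
  simp only [φ, one_smul, zero_smul, add_zero, v, add_sub_cancel] at this
  linarith

theorem two_mul_mul_sub_le_sq_norm_gradient {f : E → ℝ} {m : ℝ} (hm : 0 ≤ m)
    (hconv : ∀ x y, f x + ⟪gradient f x, y - x⟫_ℝ + m / 2 * ‖y - x‖ ^ 2 ≤ f y) (x y : E) :
    2 * m * (f x - f y) ≤ ‖gradient f x‖ ^ 2 := by
  have hsq : 0 ≤ ‖gradient f x + m • (y - x)‖ ^ 2 := sq_nonneg _
  rw [norm_add_sq_real, real_inner_smul_right, norm_smul, Real.norm_of_nonneg hm] at hsq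
  nlinarith [mul_le_mul_of_nonneg_left (hconv x y) hm]

end

theorem stmt_16_general {n : ℕ} (f : EuclideanSpace ℝ (Fin n) → ℝ) (m M η lam : ℝ)
    (hm : 0 < m) (hM : 0 < M)
    (hdiff : Differentiable ℝ f)
    (hconv : ∀ x y, f x + ⟪gradient f x, y - x⟫_ℝ + m / 2 * ‖y - x‖ ^ 2 ≤ f y)
    (hlip : ∀ x y, ‖gradient f x - gradient f y‖ ≤ M * ‖x - y‖)
    (xstar : EuclideanSpace ℝ (Fin n))
    (hη0 : 0 ≤ η) (hlam0 : 0 ≤ lam)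
    (hη : η ≤ 1 / (2 * M)) (hηlam : η * lam ≤ m / (2 * M))
    (x z : EuclideanSpace ℝ (Fin n)) :
    f (x - η • (gradient f x + lam • (x - z))) - f xstar ≤
      (1 - m * η) * (f x - f xstar) - η * lam * (f x - f z) := by
  set g := gradient f x
  set δ := x - z
  have hMη : M * η ≤ 1 / 2 := by
    rw [le_div_iff₀ (by positivity)] at hη; linarith
  have hMηlam : M * (η * lam) ≤ m / 2 := by
    rw [le_div_iff₀ (by positivity)] at hηlam; linarith
  have hdescent := le_add_inner_gradient_add_sq_norm_of_lipschitz hdiff hlip x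
    (x - η • (g + lam • δ))
  rw [sub_sub_cancel_left, inner_neg_right, norm_neg, real_inner_smul_right, inner_add_right,
    real_inner_smul_right, real_inner_self_eq_norm_sq, norm_smul, Real.norm_of_nonneg hη0,
    mul_pow] at hdescent
  have hsplit := sq_norm_add_le g (lam • δ)
  rw [norm_smul, Real.norm_of_nonneg hlam0, mul_pow] at hsplit
  have hsc : f x - f z + m / 2 * ‖δ‖ ^ 2 ≤ ⟪g, δ⟫_ℝ := by
    have := hconv x z
    rw [← neg_sub x z, inner_neg_right, norm_neg] at this
    linarith
  have hPL := two_mul_mul_sub_le_sq_norm_gradient hm.le hconv x xstar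
  linarith [mul_le_mul_of_nonneg_left hsplit (by positivity : 0 ≤ M * η ^ 2 / 2),
    mul_le_mul_of_nonneg_left hsc (mul_nonneg hη0 hlam0), mul_le_mul_of_nonneg_left hPL hη0,
    mul_nonneg (mul_nonneg (sub_nonneg.2 hMη) hη0) (sq_nonneg ‖g‖),
    mul_nonneg (mul_nonneg (sub_nonneg.2 hMηlam) (mul_nonneg hη0 hlam0)) (sq_nonneg ‖δ‖)]

theorem stmt_16 {n : ℕ} (f : EuclideanSpace ℝ (Fin n) → ℝ) (m M η lam : ℝ)
    (hm : 0 < m) (hM : 0 < M)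
    (hdiff : Differentiable ℝ f)
    (hconv : ∀ x y, f x + ⟪gradient f x, y - x⟫_ℝ + m / 2 * ‖y - x‖ ^ 2 ≤ f y)
    (hlip : ∀ x y, ‖gradient f x - gradient f y‖ ≤ M * ‖x - y‖)
    (xstar : EuclideanSpace ℝ (Fin n)) (hmin : ∀ y, f xstar ≤ f y)
    (hη0 : 0 ≤ η) (hlam0 : 0 ≤ lam)
    (hη : η ≤ 1 / (2 * M)) (hηlam : η * lam ≤ m / (2 * M))
    (hηslam : η * Real.sqrt lam ≤ Real.sqrt m / (M * Real.sqrt 2))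
    (x z : EuclideanSpace ℝ (Fin n)) :
    f (x - η • (gradient f x + lam • (x - z))) - f xstar ≤
      (1 - m * η) * (f x - f xstar) - η * lam * (f x - f z) :=
  stmt_16_general f m M η lam hm hM hdiff hconv hlip xstar hη0 hlam0 hη hηlam x z
end
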